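/- arXiv:2512.23677 — 2 statements merged into one kernel-verified Lean document; each statement's English description precedes it below -/
import Mathlib

section
/- Let a₀ be an odd integer with a₀ ≠ 1, and let w₀ = v₂(a₀ − 1). If w₀ ≤ 2, then a₀ is not the square of any element of the ring ℤ₂ of 2-adic integers. If w₀ ≥ 3, then there exists α ∈ ℤ₂ with α^(2^(w₀−2)) = a₀, but there is no β ∈ ℤ₂ with β^(2^(w₀−1)) = a₀. -/
/-!
A unit of `ℤ₂` is `≡ 1 mod 2`, so its square is `≡ 1 mod 8`, and squaring turns `x ≡ 1 mod 2^m`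
(`m ≥ 1`) into `x² ≡ 1 mod 2^(m+1)`; hence every `2^(k+1)`-th power of a unit is
`≡ 1 mod 2^(k+3)`, which rules out the roots of order `2` (if `w₀ ≤ 2`) and `2^(w₀-1)`.
Conversely, Hensel's lemma for `X² - a` at `1` turns `a ≡ 1 mod 2^(m+1)` (`m ≥ 2`) into a square
root `b ≡ 1 mod 2^m`, and `w₀ - 2` such square roots give a `2^(w₀-2)`-th root of `a₀`.
-/

open Polynomial

theorem two_pow_add_dvd_pow_two_pow_sub_one {R : Type*} [CommRing R] {x : R} {m : ℕ}
    (hm : 1 ≤ m) (h : (2 : R) ^ m ∣ x - 1) (k : ℕ) : (2 : R) ^ (m + k) ∣ x ^ 2 ^ k - 1 := by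
  induction k with
  | zero => simpa using h
  | succ k ih =>
    have h_two : (2 : R) ∣ x ^ 2 ^ k + 1 := by
      have : (2 : R) ∣ x ^ 2 ^ k - 1 := (dvd_pow_self 2 (by omega)).trans ih
      convert this.add (dvd_refl 2) using 1; ring
    rw [pow_succ, pow_mul, ← add_assoc, pow_succ,
      show (x ^ 2 ^ k) ^ 2 - 1 = (x ^ 2 ^ k - 1) * (x ^ 2 ^ k + 1) by ring]
    exact mul_dvd_mul ih h_two

namespace PadicInt

section General

variable {p : ℕ} [Fact p.Prime]

theorem norm_le_inv_pow_iff_dvd (x : ℤ_[p]) (n : ℕ) :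
    ‖x‖ ≤ (p : ℝ)⁻¹ ^ n ↔ (p : ℤ_[p]) ^ n ∣ x := by
  rw [inv_pow, ← zpow_natCast, ← zpow_neg, norm_le_pow_iff_mem_span_pow,
    Ideal.mem_span_singleton]

theorem pow_dvd_intCast_iff_le_padicValInt {a : ℤ} (ha : a ≠ 0) (n : ℕ) :
    (p : ℤ_[p]) ^ n ∣ (a : ℤ_[p]) ↔ n ≤ padicValInt p a := by
  rw [pow_p_dvd_int_iff, padicValInt_dvd_iff, or_iff_right ha]

end General

theorem norm_two : ‖(2 : ℤ_[2])‖ = 2⁻¹ := by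
  simpa using norm_p (p := 2)

theorem norm_le_two_inv_pow_iff_dvd (x : ℤ_[2]) (n : ℕ) : ‖x‖ ≤ 2⁻¹ ^ n ↔ 2 ^ n ∣ x := by
  exact_mod_cast norm_le_inv_pow_iff_dvd x n

theorem two_dvd_or_two_dvd_sub_one (x : ℤ_[2]) : 2 ∣ x ∨ 2 ∣ x - 1 := by
  obtain ⟨n, hn, hx⟩ := exists_mem_range x
  rw [maximalIdeal_eq_span_p, Ideal.mem_span_singleton] at hx
  interval_cases n <;> simp_all

theorem two_pow_three_dvd_sq_sub_one {β : ℤ_[2]} (hβ : ¬ 2 ∣ β) : 2 ^ 3 ∣ β ^ 2 - 1 := by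
  obtain ⟨s, hs⟩ := (two_dvd_or_two_dvd_sub_one β).resolve_left hβ
  have h_consecutive : 2 ∣ s * (s + 1) := by
    rcases two_dvd_or_two_dvd_sub_one s with h | h
    · exact h.mul_right _
    · refine Dvd.dvd.mul_left ?_ s
      convert h.add (dvd_refl 2) using 1; ring
  obtain ⟨t, ht⟩ := h_consecutive
  exact ⟨t, by linear_combination (β + 1 + 2 * s) * hs + 4 * ht⟩

theorem two_pow_add_three_dvd_pow_sub_one {β : ℤ_[2]} (hβ : ¬ 2 ∣ β) (k : ℕ) :
    2 ^ (k + 3) ∣ β ^ 2 ^ (k + 1) - 1 := by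
  rw [add_comm, pow_succ', pow_mul]
  exact two_pow_add_dvd_pow_two_pow_sub_one (by norm_num) (two_pow_three_dvd_sq_sub_one hβ) k

theorem exists_sq_eq_of_two_pow_dvd_sub_one {a : ℤ_[2]} {m : ℕ} (hm : 2 ≤ m)
    (ha : 2 ^ (m + 1) ∣ a - 1) : ∃ b : ℤ_[2], b ^ 2 = a ∧ 2 ^ m ∣ b - 1 := by
  have h_norm_a : ‖a - 1‖ ≤ 2⁻¹ ^ (m + 1) := (norm_le_two_inv_pow_iff_dvd _ _).2 ha
  set F : ℤ_[2][X] := X ^ 2 - C a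
  have h_deriv : aeval (1 : ℤ_[2]) (derivative F) = 2 := by simp [F, one_add_one_eq_two]
  have h_hensel : ‖aeval (1 : ℤ_[2]) F‖ < ‖aeval (1 : ℤ_[2]) (derivative F)‖ ^ 2 := by
    have : (2⁻¹ : ℝ) ^ (m + 1) < 2⁻¹ ^ 2 :=
      pow_lt_pow_right_of_lt_one₀ (by norm_num) (by norm_num) (by omega)
    rw [h_deriv, norm_two]
    simpa [F, norm_sub_rev] using h_norm_a.trans_lt this
  obtain ⟨z, hz, hz_near, -⟩ := hensels_lemma h_hensel
  have hz_sq : z ^ 2 = a := by simpa [F, sub_eq_zero] using hz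
  rw [h_deriv, norm_two] at hz_near
  -- Since `‖z - 1‖ < ‖2‖`, the factor `z + 1 = (z - 1) + 2` of `z² - 1` has norm exactly `‖2‖`.
  have h_norm_add : ‖z + 1‖ = 2⁻¹ := by
    rw [show z + 1 = z - 1 + 2 by ring, norm_add_eq_max_of_ne (by rw [norm_two]; exact hz_near.ne),
      norm_two, max_eq_right hz_near.le]
  refine ⟨z, hz_sq, (norm_le_two_inv_pow_iff_dvd _ _).1 ?_⟩
  have h_prod : ‖z - 1‖ * ‖z + 1‖ ≤ 2⁻¹ ^ m * 2⁻¹ := by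
    rw [← norm_mul, ← pow_succ, show (z - 1) * (z + 1) = z ^ 2 - 1 by ring, hz_sq]
    exact h_norm_a
  rw [h_norm_add] at h_prod
  exact le_of_mul_le_mul_right h_prod (by norm_num)

theorem exists_pow_two_pow_eq_of_two_pow_dvd_sub_one (k : ℕ) {a : ℤ_[2]}
    (ha : 2 ^ (k + 2) ∣ a - 1) : ∃ α : ℤ_[2], α ^ 2 ^ k = a := by
  induction k generalizing a with
  | zero => exact ⟨a, pow_one a⟩
  | succ k ih =>
    obtain ⟨b, hb_sq, hb⟩ := exists_sq_eq_of_two_pow_dvd_sub_one (m := k + 2) (by omega) ha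
    obtain ⟨α, hα⟩ := ih hb
    exact ⟨α, by rw [pow_succ, pow_mul, hα, hb_sq]⟩

end PadicInt

/-- **Lemma (2-power roots in `ℤ₂`).** Let `a₀` be an odd integer with `a₀ ≠ 1` and
`w₀ = v₂(a₀ − 1)`.  If `w₀ ≤ 2` then `a₀` is not a square in `ℤ₂`.  If `w₀ ≥ 3` then `a₀` is a
`2^{w₀−2}`-th power in `ℤ₂` but not a `2^{w₀−1}`-th power in `ℤ₂`. -/
theorem stmt_15 (a₀ : ℤ) (ha₀ : Odd a₀) (hne : a₀ ≠ 1)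
    (w₀ : ℕ) (hw₀ : w₀ = padicValInt 2 (a₀ - 1)) :
    (w₀ ≤ 2 → ¬ ∃ x : ℤ_[2], x ^ 2 = (a₀ : ℤ_[2])) ∧
    (3 ≤ w₀ →
      (∃ α : ℤ_[2], α ^ (2 ^ (w₀ - 2)) = (a₀ : ℤ_[2])) ∧
      ¬ ∃ β : ℤ_[2], β ^ (2 ^ (w₀ - 1)) = (a₀ : ℤ_[2])) := by
  have h_val (n : ℕ) : (2 : ℤ_[2]) ^ n ∣ (a₀ : ℤ_[2]) - 1 ↔ n ≤ w₀ := by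
    rw [hw₀, ← PadicInt.pow_dvd_intCast_iff_le_padicValInt (sub_ne_zero.mpr hne)]
    push_cast; rfl
  have h_odd : ¬ (2 : ℤ_[2]) ∣ a₀ := by
    simpa [← even_iff_two_dvd, Int.not_even_iff_odd, ha₀] using
      (PadicInt.pow_p_dvd_int_iff (p := 2) 1 a₀).not.2
  have h_root_odd {x : ℤ_[2]} {n : ℕ} (hn : n ≠ 0) (hx : x ^ n = a₀) : ¬ 2 ∣ x :=
    fun h => h_odd (hx ▸ dvd_pow h hn)
  refine ⟨fun hw ⟨x, hx⟩ => ?_, fun hw => ⟨?_, fun ⟨β, hβ⟩ => ?_⟩⟩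
  · have := PadicInt.two_pow_three_dvd_sq_sub_one (h_root_odd two_ne_zero hx)
    rw [hx, h_val] at this
    omega
  · exact PadicInt.exists_pow_two_pow_eq_of_two_pow_dvd_sub_one _ ((h_val _).2 (by omega))
  · have := PadicInt.two_pow_add_three_dvd_pow_sub_one (h_root_odd (by positivity) hβ) (w₀ - 2)
    rw [show w₀ - 2 + 1 = w₀ - 1 by omega, hβ, h_val] at this
    omega
end

section
/- Let n = 2^m·n₀ with m ≥ 1 and n₀ odd, and let a be an odd, n-th power free integer such that xⁿ − a is irreducible over ℚ. Let L = ℚ(ⁿ√a) and let M = ℚ((ⁿ√a)^{n₀}) be its subfield generated by the 2^m-th root of a. Let 𝔭 be a maximal ideal of O_M containing 2, with residue field k_𝔭 = O_M/𝔭. Then 𝔭 is unramified in O_L (every prime of O_L above 𝔭 has ramification index 1 over 𝔭), and the multiset of residue degrees [O_L/𝔓 : k_𝔭], as 𝔓 ranges over the primes of O_L above 𝔭, equals the multiset of degrees of the irreducible factors of x^{n₀} − 1 in k_𝔭[x]. -/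
open Polynomial NumberField UniqueFactorizationMonoid

attribute [local instance] Ideal.Quotient.field

set_option synthInstance.maxHeartbeats 1000000
set_option maxHeartbeats 1000000

/-- The multiset of degrees (with multiplicity) of the irreducible factors of `g` over `F`. -/
noncomputable def factorDegrees (F : Type*) [Field F] (g : F[X]) : Multiset ℕ :=
  letI := Classical.decEq F
  (normalizedFactors g).map natDegree

/-- The multiset of residue degrees over `𝔭` of the (distinct) primes of `S` lying above the
prime `𝔭` of `R`, i.e. of the prime factors of `𝔭·S`. -/
noncomputable def residueDegreesAbove (R S : Type*) [CommRing R] [CommRing S]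
    [IsDedekindDomain S] [Algebra R S] (𝔭 : Ideal R) : Multiset ℕ :=
  letI := Classical.decEq (Ideal S)
  (normalizedFactors (Ideal.map (algebraMap R S) 𝔭)).dedup.map fun P =>
    Ideal.inertiaDeg' 𝔭 P

/-!
Since `xⁿ − a` is irreducible, `L = ℚ(α)`, hence `L = M(α)` and `[L : M] = n₀`, so `x^{n₀} − β` is
the minimal polynomial of `α` over `𝓞 M`. The residue field of `𝔭` has characteristic `2`, where
Frobenius is injective; as `β^{2^m} = a` is odd, `β ≡ 1 mod 𝔭`. The different relation
`𝔣 · 𝔇 = (f'(α))` puts `f'(α) · α = n₀ β` in the conductor `𝔣` of `𝓞 M[α]`, and `n₀ β` is a unit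
mod `𝔭`, so the Kummer–Dedekind theorem applies: the primes above `𝔭` correspond to the irreducible
factors of `x^{n₀} − 1` over `𝓞 M ⧸ 𝔭`, with the multiplicities as ramification indices and the
degrees as residue degrees. For odd `n₀` this polynomial is separable, so no prime ramifies.
-/

theorem Ideal.Quotient.charP_two {R : Type*} [CommRing R] {𝔭 : Ideal R} [𝔭.IsMaximal]
    (h2 : (2 : R) ∈ 𝔭) : CharP (R ⧸ 𝔭) 2 :=
  CharTwo.of_one_ne_zero_of_two_eq_zero one_ne_zero
    (by rw [← map_ofNat (Ideal.Quotient.mk 𝔭) 2]; exact Ideal.Quotient.eq_zero_iff_mem.mpr h2)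

theorem eq_one_of_pow_expChar_pow_eq_one {R : Type*} [CommRing R] [IsReduced R] (p : ℕ)
    [ExpChar R p] {y : R} {m : ℕ} (h : y ^ p ^ m = 1) : y = 1 :=
  iterateFrobenius_inj R p m (by simpa [iterateFrobenius_def] using h)

theorem IntermediateField.adjoin_eq_top_of_irreducible_X_pow_sub_C {K L : Type*} [Field K]
    [Field L] [Algebra K L] [FiniteDimensional K L] {α : L} {n : ℕ} {a : K}
    (hirr : Irreducible (X ^ n - C a)) (hα : α ^ n = algebraMap K L a)
    (hn : Module.finrank K L = n) : adjoin K {α} = ⊤ := by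
  have hα_int : IsIntegral K α := .of_finite K α
  have hmin : minpoly K α = X ^ n - C a := (minpoly.eq_of_irreducible_of_monic hirr
    (by rw [map_sub, aeval_X_pow, aeval_C, hα, sub_self])
    (monic_X_pow_sub_C a (hn ▸ Module.finrank_pos.ne'))).symm
  refine eq_of_le_of_finrank_eq le_top ?_
  rw [adjoin.finrank hα_int, hmin, natDegree_X_pow_sub_C, finrank_top', hn]

theorem minpoly_eq_X_pow_sub_C {K L : Type*} [Field K] [Field L] [Algebra K L]
    [FiniteDimensional K L] {α : L} {d : ℕ} {b : K} (hα : α ^ d = algebraMap K L b)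
    (htop : IntermediateField.adjoin K {α} = ⊤) (hd : Module.finrank K L = d) :
    minpoly K α = X ^ d - C b := by
  have hα_int : IsIntegral K α := .of_finite K α
  have hd0 : d ≠ 0 := hd ▸ Module.finrank_pos.ne'
  refine (eq_of_monic_of_dvd_of_natDegree_le (minpoly.monic hα_int) (monic_X_pow_sub_C b hd0)
    (minpoly.dvd K α (by rw [map_sub, aeval_X_pow, aeval_C, hα, sub_self])) ?_).symm
  rw [natDegree_X_pow_sub_C, ← IntermediateField.adjoin.finrank hα_int, htop,
    IntermediateField.finrank_top', hd]

theorem NumberField.RingOfIntegers.minpoly_eq_X_pow_sub_C {K L : Type*} [Field K]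
    [NumberField K] [Field L] [NumberField L] [Algebra K L] {x : 𝓞 L} {d : ℕ} {b : 𝓞 K}
    (h : minpoly K (x : L) = X ^ d - C (b : K)) : minpoly (𝓞 K) x = X ^ d - C b := by
  refine Polynomial.map_injective _ (FaithfulSMul.algebraMap_injective (𝓞 K) K) ?_
  rw [← minpoly.isIntegrallyClosed_eq_field_fractions K L (.of_finite (𝓞 K) x)]
  simpa using h

theorem Ideal.ramificationIdx'_eq_one_of_nodup {R S : Type*} [CommRing R] [IsDomain R]
    [CommRing S] [IsDedekindDomain S] [Algebra R S] [Module.IsTorsionFree R S] {p : Ideal R}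
    [p.IsMaximal] (hp : p ≠ ⊥) (h : (normalizedFactors (p.map (algebraMap R S))).Nodup)
    (P : Ideal S) [hP : P.IsPrime] [P.LiesOver p] : ramificationIdx' p P = 1 := by
  have hmem := (mem_primesOver_iff_mem_normalizedFactors S hp).mp ⟨hP, inferInstance⟩
  rw [IsDedekindDomain.ramificationIdx'_eq_normalizedFactors_count (map_ne_bot_of_ne_bot hp) hP
    (ne_zero_of_mem_normalizedFactors hmem), Multiset.count_eq_one_of_mem h hmem]

namespace KummerDedekind

open _root_.Ideal

variable {R S : Type*} [CommRing R] [IsDomain R] [IsIntegrallyClosed R] [CommRing S]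
  [IsDedekindDomain S] [Algebra R S] [Module.IsTorsionFree R S] {x : S} {I : Ideal R}

noncomputable def quotSpanMapEquivQuotSup (hx : (conductor R x).comap (algebraMap R S) ⊔ I = ⊤)
    (hx' : IsIntegral R x) {Q : R[X]}
    (hQ : Q.map (Ideal.Quotient.mk I) ∣ (minpoly R x).map (Ideal.Quotient.mk I)) :
    (R ⧸ I)[X] ⧸ span {Q.map (Ideal.Quotient.mk I)} ≃+*
      S ⧸ I.map (algebraMap R S) ⊔ span {aeval x Q} :=
  (quotEquivOfEq <| by
      rw [← span_insert, span_pair_comm, span_pair_eq_span_left_iff_dvd.mpr hQ]).trans <|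
    (DoubleQuot.quotQuotEquivQuotSup _ _).symm.trans <|
    (quotientEquiv _ _ (quotMapEquivQuotQuotMap hx hx').symm (by
      simp [map_span, quotMapEquivQuotQuotMap_symm_apply])).trans <|
    DoubleQuot.quotQuotEquivQuotSup _ _

theorem quotSpanMapEquivQuotSup_mk (hx : (conductor R x).comap (algebraMap R S) ⊔ I = ⊤)
    (hx' : IsIntegral R x) {Q : R[X]}
    (hQ : Q.map (Ideal.Quotient.mk I) ∣ (minpoly R x).map (Ideal.Quotient.mk I)) (P : R[X]) :
    quotSpanMapEquivQuotSup hx hx' hQ (Ideal.Quotient.mk _ (P.map (Ideal.Quotient.mk I))) =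
      Ideal.Quotient.mk _ (aeval x P) := by
  simp only [quotSpanMapEquivQuotSup, RingEquiv.trans_apply, quotEquivOfEq_mk,
    DoubleQuot.quotQuotEquivQuotSup_symm_quotQuotMk]
  rw [DoubleQuot.quotQuotMk, RingHom.comp_apply, quotientEquiv_mk,
    quotMapEquivQuotQuotMap_symm_apply]
  exact DoubleQuot.quotQuotEquivQuotSup_quotQuotMk _ _ _

theorem finrank_quotient_map_sup_span_aeval_eq_natDegree
    (hx : (conductor R x).comap (algebraMap R S) ⊔ I = ⊤) (hx' : IsIntegral R x) [I.IsMaximal]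
    {Q : R[X]}
    (hQ : Q.map (Ideal.Quotient.mk I) ∣ (minpoly R x).map (Ideal.Quotient.mk I))
    [(I.map (algebraMap R S) ⊔ span {aeval x Q}).LiesOver I] :
    Module.finrank (R ⧸ I) (S ⧸ I.map (algebraMap R S) ⊔ span {aeval x Q}) =
      (Q.map (Ideal.Quotient.mk I)).natDegree := by
  rw [← finrank_quotient_span_eq_natDegree]
  refine (Algebra.finrank_eq_of_equiv_equiv (RingEquiv.refl _)
    (quotSpanMapEquivQuotSup hx hx' hQ) ?_).symm
  refine Ideal.Quotient.ringHom_ext (RingHom.ext fun r => ?_)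
  have := quotSpanMapEquivQuotSup_mk hx hx' hQ (C r)
  rw [Polynomial.map_C, aeval_C] at this
  exact this.symm

open scoped Classical in
theorem inertiaDeg'_normalizedFactorsMapEquivNormalizedFactorsMinPolyMk_symm
    [hI : I.IsMaximal] (hI' : I ≠ ⊥) (hx : (conductor R x).comap (algebraMap R S) ⊔ I = ⊤)
    (hx' : IsIntegral R x) {q : (R ⧸ I)[X]}
    (hq : q ∈ normalizedFactors ((minpoly R x).map (Ideal.Quotient.mk I))) :
    inertiaDeg' I
      ((normalizedFactorsMapEquivNormalizedFactorsMinPolyMk hI hI' hx hx').symm ⟨q, hq⟩ :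
        Ideal S) = q.natDegree := by
  obtain ⟨Q, rfl⟩ := Polynomial.map_surjective _ Ideal.Quotient.mk_surjective q
  set J := (normalizedFactorsMapEquivNormalizedFactorsMinPolyMk hI hI' hx hx').symm ⟨_, hq⟩
  have hJ_eq : (J : Ideal S) = I.map (algebraMap R S) ⊔ span {aeval x Q} := by
    rw [normalizedFactorsMapEquivNormalizedFactorsMinPolyMk_symm_apply_eq_span,
      span_union, span_eq]
  have : (J : Ideal S).LiesOver I :=
    ((mem_primesOver_iff_mem_normalizedFactors S hI').mpr J.2).2
  rw [hJ_eq] at this ⊢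
  rw [inertiaDeg'_algebraMap]
  exact finrank_quotient_map_sup_span_aeval_eq_natDegree hx hx' (dvd_of_mem_normalizedFactors hq)

open scoped Classical in
theorem nodup_normalizedFactors_map [hI : I.IsMaximal] (hI' : I ≠ ⊥)
    (hx : (conductor R x).comap (algebraMap R S) ⊔ I = ⊤) (hx' : IsIntegral R x)
    (hsq : Squarefree ((minpoly R x).map (Ideal.Quotient.mk I))) :
    (normalizedFactors (I.map (algebraMap R S))).Nodup := by
  rw [normalizedFactors_ideal_map_eq_normalizedFactors_min_poly_mk_map hI hI' hx hx']
  exact (Multiset.nodup_attach.mpr ((squarefree_iff_nodup_normalizedFactors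
    (map_monic_ne_zero (minpoly.monic hx'))).mp hsq)).map
      (Subtype.val_injective.comp (Equiv.injective _))

theorem residueDegreesAbove_eq_factorDegrees [hI : I.IsMaximal] (hI' : I ≠ ⊥)
    (hx : (conductor R x).comap (algebraMap R S) ⊔ I = ⊤) (hx' : IsIntegral R x)
    (hsq : Squarefree ((minpoly R x).map (Ideal.Quotient.mk I))) :
    residueDegreesAbove R S I =
      factorDegrees (R ⧸ I) ((minpoly R x).map (Ideal.Quotient.mk I)) := by
  rw [residueDegreesAbove, factorDegrees,
    (@Multiset.dedup_eq_self _ (Classical.decEq _) _).mpr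
      (nodup_normalizedFactors_map hI' hx hx' hsq),
    normalizedFactors_ideal_map_eq_normalizedFactors_min_poly_mk_map hI hI' hx hx',
    Multiset.map_map, ← Multiset.attach_map_val' _ natDegree]
  exact Multiset.map_congr rfl fun q _ =>
    inertiaDeg'_normalizedFactorsMapEquivNormalizedFactorsMinPolyMk_symm hI' hx hx' q.2

end KummerDedekind

section PureExtension

variable (A K : Type*) {L B : Type*} [CommRing A] [Field K] [CommRing B] [Field L]
  [Algebra A K] [Algebra B L] [Algebra A B] [Algebra K L] [Algebra A L]
  [IsScalarTower A K L] [IsScalarTower A B L] [IsDomain A] [IsFractionRing A K]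
  [IsIntegrallyClosed A] [IsDedekindDomain B] [Module.IsTorsionFree A B]
  [FiniteDimensional K L] [IsIntegralClosure B A L] [Algebra.IsSeparable K L]

theorem algebraMap_natCast_mul_mem_conductor {x : B}
    (hx : Algebra.adjoin K {algebraMap B L x} = ⊤) {d : ℕ} (hd : d ≠ 0) {b : A}
    (hmin : minpoly A x = X ^ d - C b) :
    algebraMap A B (d * b) ∈ conductor A x := by
  have hderiv : aeval x (derivative (minpoly A x)) ∈ conductor A x := by
    have := Ideal.mem_span_singleton_self (aeval x (derivative (minpoly A x)))
    rw [← conductor_mul_differentIdeal A K L x hx] at this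
    exact Ideal.mul_le_left this
  have hpow : x ^ d = algebraMap A B b := by
    simpa [hmin, sub_eq_zero] using minpoly.aeval A x
  have : aeval x (derivative (minpoly A x)) * x = algebraMap A B (d * b) := by
    rw [hmin, derivative_sub, derivative_C, sub_zero, derivative_X_pow, map_mul, aeval_C,
      aeval_X_pow, mul_assoc, ← pow_succ, Nat.sub_add_cancel (Nat.pos_of_ne_zero hd), hpow,
      map_mul, map_natCast]
  exact this ▸ Ideal.mul_mem_right x _ hderiv

theorem comap_conductor_sup_eq_top_of_minpoly_eq_X_pow_sub_C {x : B}
    (hx : Algebra.adjoin K {algebraMap B L x} = ⊤) {d : ℕ} {b : A}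
    (hmin : minpoly A x = X ^ d - C b) {𝔭 : Ideal A} [h𝔭 : 𝔭.IsMaximal] (hd : (d : A) ∉ 𝔭)
    (hb : b ∉ 𝔭) : (conductor A x).comap (algebraMap A B) ⊔ 𝔭 = ⊤ := by
  have hd0 : d ≠ 0 := by rintro rfl; exact hd (by simp)
  by_contra hne
  have h : (d : A) * b ∈ 𝔭 := by
    rw [h𝔭.eq_of_le hne le_sup_right]
    exact Ideal.mem_sup_left (algebraMap_natCast_mul_mem_conductor A K hx hd0 hmin)
  exact (h𝔭.isPrime.mem_or_mem h).elim hd hb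

theorem ramificationIdx'_eq_one_and_residueDegreesAbove_of_minpoly_eq_X_pow_sub_C {x : B}
    (hx : IntermediateField.adjoin K {algebraMap B L x} = ⊤) {d : ℕ} {b : A}
    (hmin : minpoly A x = X ^ d - C b) {𝔭 : Ideal A} [𝔭.IsMaximal] (h𝔭 : 𝔭 ≠ ⊥)
    (hd : (d : A ⧸ 𝔭) ≠ 0) (hb : Ideal.Quotient.mk 𝔭 b ≠ 0) :
    (∀ P : Ideal B, P.IsMaximal → P.comap (algebraMap A B) = 𝔭 →
        Ideal.ramificationIdx' 𝔭 P = 1) ∧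
    residueDegreesAbove A B 𝔭 = factorDegrees (A ⧸ 𝔭) (X ^ d - C (Ideal.Quotient.mk 𝔭 b)) := by
  have hadj : Algebra.adjoin K {algebraMap B L x} = ⊤ := by
    rw [← IntermediateField.adjoin_simple_toSubalgebra_of_isAlgebraic (.of_finite K _), hx,
      IntermediateField.top_toSubalgebra]
  have hcond := comap_conductor_sup_eq_top_of_minpoly_eq_X_pow_sub_C A K hadj hmin
    (by rwa [ne_eq, ← map_natCast (Ideal.Quotient.mk 𝔭), Ideal.Quotient.eq_zero_iff_mem] at hd)
    (by rwa [ne_eq, Ideal.Quotient.eq_zero_iff_mem] at hb)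
  have hx' : IsIntegral A x := IsIntegralClosure.isIntegral A L x
  have hg : (minpoly A x).map (Ideal.Quotient.mk 𝔭) = X ^ d - C (Ideal.Quotient.mk 𝔭 b) := by
    simp [hmin]
  have hsq : Squarefree ((minpoly A x).map (Ideal.Quotient.mk 𝔭)) :=
    hg ▸ (separable_X_pow_sub_C _ hd hb).squarefree
  refine ⟨fun P _ hP => ?_,
    hg ▸ KummerDedekind.residueDegreesAbove_eq_factorDegrees h𝔭 hcond hx' hsq⟩
  have : P.LiesOver 𝔭 := ⟨hP.symm⟩
  exact Ideal.ramificationIdx'_eq_one_of_nodup h𝔭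
    (KummerDedekind.nodup_normalizedFactors_map h𝔭 hcond hx' hsq) P

end PureExtension

theorem stmt_16_general (m n₀ n : ℕ) (hn₀ : Odd n₀) (hn : n = 2 ^ m * n₀) (a : ℤ)
    (haodd : Odd a)
    (hirr : Irreducible ((X : ℚ[X]) ^ n - C (a : ℚ)))
    (L : Type*) [Field L] [NumberField L] (α : L)
    (hα : α ^ n = (a : L)) (hdegL : Module.finrank ℚ L = n)
    (M : Type*) [Field M] [NumberField M] [Algebra M L] [IsScalarTower ℚ M L] (β : M)
    (hβ : algebraMap M L β = α ^ n₀) (hdegM : Module.finrank ℚ M = 2 ^ m)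
    (𝔭 : Ideal (𝓞 M)) [𝔭.IsMaximal] (h2 : (2 : 𝓞 M) ∈ 𝔭) :
    (∀ P : Ideal (𝓞 L), P.IsMaximal → P.comap (algebraMap (𝓞 M) (𝓞 L)) = 𝔭 →
        Ideal.ramificationIdx' 𝔭 P = 1) ∧
    residueDegreesAbove (𝓞 M) (𝓞 L) 𝔭 =
      factorDegrees (𝓞 M ⧸ 𝔭) ((X : (𝓞 M ⧸ 𝔭)[X]) ^ n₀ - 1) := by
  have hn_ne : n ≠ 0 := hn ▸ mul_ne_zero (by positivity) hn₀.pos.ne'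
  have htop : IntermediateField.adjoin M {α} = ⊤ :=
    IntermediateField.adjoin_eq_top_of_adjoin_eq_top (F := ℚ) <|
      IntermediateField.adjoin_eq_top_of_irreducible_X_pow_sub_C hirr (by rw [map_intCast, hα])
        hdegL
  have hdeg : Module.finrank M L = n₀ := Nat.eq_of_mul_eq_mul_left (by positivity : 0 < 2 ^ m) <| by
    rw [← hn, ← hdegL, ← hdegM, Module.finrank_mul_finrank]
  have hβ_pow : β ^ 2 ^ m = a := (algebraMap M L).injective <| by
    rw [map_pow, hβ, ← pow_mul, mul_comm, ← hn, hα, map_intCast]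
  let x : 𝓞 L := ⟨α, .of_pow (Nat.pos_of_ne_zero hn_ne) (hα ▸ isIntegral_intCast a)⟩
  let b : 𝓞 M := ⟨β, .of_pow (by positivity) (hβ_pow ▸ isIntegral_intCast a)⟩
  have hmin : minpoly (𝓞 M) x = X ^ n₀ - C b :=
    RingOfIntegers.minpoly_eq_X_pow_sub_C (minpoly_eq_X_pow_sub_C hβ.symm htop hdeg)
  have := Ideal.Quotient.charP_two h2
  have hb : Ideal.Quotient.mk 𝔭 b = 1 := eq_one_of_pow_expChar_pow_eq_one 2 <| by
    rw [← map_pow, show b ^ 2 ^ m = a from RingOfIntegers.ext hβ_pow, map_intCast,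
      CharTwo.intCast_eq_ite, if_neg (Int.not_even_iff_odd.mpr haodd)]
  have hn₀_ne : (n₀ : 𝓞 M ⧸ 𝔭) ≠ 0 := by
    rw [CharTwo.natCast_eq_ite, if_neg (Nat.not_even_iff_odd.mpr hn₀)]
    exact one_ne_zero
  have key := ramificationIdx'_eq_one_and_residueDegreesAbove_of_minpoly_eq_X_pow_sub_C (𝓞 M) M
    (x := x) htop hmin (fun h => two_ne_zero (Ideal.mem_bot.mp (h ▸ h2))) hn₀_ne
    (hb ▸ one_ne_zero)
  rwa [hb, map_one] at key

/-- **Lemma (splitting of a prime above 2 in `L/M`, `a` odd).** Let `n = 2^m·n₀` with `m ≥ 1`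
and `n₀` odd, let `a` be an odd, `n`-th power free integer with `xⁿ − a` irreducible over `ℚ`,
let `L = ℚ(ⁿ√a)` and let `M = ℚ((ⁿ√a)^{n₀})` (the subfield generated by the `2^m`-th root of
`a`).  Let `𝔭` be a maximal ideal of `𝓞 M` containing `2`, with residue field `k_𝔭`.  Then
`𝔭` is unramified in `𝓞 L` and the multiset of residue degrees of the primes of `𝓞 L` above
`𝔭` equals the multiset of degrees of the irreducible factors of `x^{n₀} − 1` in `k_𝔭[x]`. -/
theorem stmt_16 (m n₀ n : ℕ) (hm : 1 ≤ m) (hn₀ : Odd n₀) (hn : n = 2 ^ m * n₀) (a : ℤ)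
    (haodd : Odd a)
    (hpf : ∀ q : ℕ, q.Prime → ¬ ((q : ℤ) ^ n ∣ a))
    (hirr : Irreducible ((X : ℚ[X]) ^ n - C (a : ℚ)))
    (L : Type*) [Field L] [NumberField L] (α : L)
    (hα : α ^ n = (a : L)) (hdegL : Module.finrank ℚ L = n)
    (M : Type*) [Field M] [NumberField M] [Algebra M L] [IsScalarTower ℚ M L] (β : M)
    (hβ : algebraMap M L β = α ^ n₀) (hdegM : Module.finrank ℚ M = 2 ^ m)
    (𝔭 : Ideal (𝓞 M)) [𝔭.IsMaximal] (h2 : (2 : 𝓞 M) ∈ 𝔭) :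
    (∀ P : Ideal (𝓞 L), P.IsMaximal → P.comap (algebraMap (𝓞 M) (𝓞 L)) = 𝔭 →
        Ideal.ramificationIdx' 𝔭 P = 1) ∧
    residueDegreesAbove (𝓞 M) (𝓞 L) 𝔭 =
      factorDegrees (𝓞 M ⧸ 𝔭) ((X : (𝓞 M ⧸ 𝔭)[X]) ^ n₀ - 1) :=
  stmt_16_general m n₀ n hn₀ hn a haodd hirr L α hα hdegL M β hβ hdegM 𝔭 h2
end
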